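/- For every β ∈ (0,1), the map G : ℝ^{𝒜×𝒳} → ℝ^{𝒜×𝒳} with components G_{a|x}(q) = β q_{a|x} + (1−β) H_{a|x}(q) satisfies, at every q ∈ ℝ^{𝒜×𝒳} and for every component (ã,x̃), Σ_{a',x'} | ∂G_{ã|x̃}/∂q_{a'|x'} | < 1; equivalently, the ℓ∞-operator norm of the Jacobian of G is strictly less than 1 at every point. -/

import Mathlib

/-! Only the block `a' = ã` of the Jacobian of `H` is nonzero, and there
`c_{x'} := -∂H_{ã|x̃}/∂q_{ã|x'} = Σ_y P(y|x̃,ã) π(x'|y)` with the posterior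
`π(x'|y) = P_X(x') P(y|x',ã) 2^{q_{ã|x'}} / Σ_x P_X(x) P(y|x,ã) 2^{q_{ã|x}}`.
So `c ≥ 0`, `Σ_{x'} c_{x'} ≤ 1` since `π(·|y)` sums to at most `1`, and `c_{x̃} > 0`. Hence the
row of the Jacobian of `G` has `ℓ¹` norm `|β - (1-β) c_{x̃}| + (1-β) Σ_{x' ≠ x̃} c_{x'}`, which is
strictly below `β + (1-β) Σ_{x'} c_{x'} ≤ 1` because `β` and `c_{x̃}` are both positive. -/

open Finset

noncomputable section

/-- A probability mass function on a finite alphabet. -/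
def IsPMF {α : Type} [Fintype α] (p : α → ℝ) : Prop :=
  (∀ a, 0 ≤ p a) ∧ ∑ a, p a = 1

variable {X Y A : Type} [Fintype X] [Fintype Y] [Fintype A]
  [DecidableEq X] [DecidableEq Y] [DecidableEq A]

/-- The map `H_{a|x}(q) = log₂( 2^{μ_x} α_{a,x} /
Π_y [ Σ_x̃ P_X(x̃) P_{Y|X,A}(y|x̃,a) 2^{q_{a|x̃}} ]^{P_{Y|X,A}(y|x,a)} )`. -/
def Hfun (PX : X → ℝ) (PW : A → X → Y → ℝ) (μ : X → ℝ) (α : A → X → ℝ)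
    (q : A × X → ℝ) (a : A) (x : X) : ℝ :=
  Real.logb 2 ((2 : ℝ) ^ (μ x) * α a x /
    ∏ y, (∑ xt, PX xt * PW a xt y * (2 : ℝ) ^ (q (a, xt))) ^ (PW a x y))

/-- The claimed partial derivative `∂H_{ã|x̃}/∂q_{a'|x'}`. -/
def Hpd (PX : X → ℝ) (PW : A → X → Y → ℝ) (q : A × X → ℝ)
    (at' : A) (xt' : X) (a' : A) (x' : X) : ℝ :=
  -(if at' = a' then (1 : ℝ) else 0) * ∑ y, PW at' xt' y *
    (PX x' * PW a' x' y * (2 : ℝ) ^ (q (a', x')) /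
      (∑ x, PX x * PW at' x y * (2 : ℝ) ^ (q (at', x))))
/-- The map `G : ℝ^{A×X} → ℝ^{A×X}` with components
`G_{a|x}(q) = β q_{a|x} + (1−β) H_{a|x}(q)`. -/
def Gmap (PX : X → ℝ) (PW : A → X → Y → ℝ) (μ : X → ℝ) (α : A → X → ℝ) (β : ℝ)
    (q : A × X → ℝ) : A × X → ℝ :=
  fun p => β * q p + (1 - β) * Hfun PX PW μ α q p.1 p.2

/-- The claimed partial derivative `∂G_{ã|x̃}/∂q_{a'|x'}`. -/
def Gpd (PX : X → ℝ) (PW : A → X → Y → ℝ) (β : ℝ) (q : A × X → ℝ)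
    (at' : A) (xt' : X) (a' : A) (x' : X) : ℝ :=
  β * (if (at', xt') = (a', x') then (1 : ℝ) else 0) +
    (1 - β) * Hpd PX PW q at' xt' a' x'

end

theorem IsPMF.exists_pos {α : Type} [Fintype α] {p : α → ℝ} (hp : IsPMF p) : ∃ a, 0 < p a := by
  by_contra! h
  have := Finset.sum_nonpos fun a (_ : a ∈ univ) => h a
  linarith [hp.2]

theorem sum_abs_mul_ite_add_lt_one {ι : Type*} [Fintype ι] [DecidableEq ι] {β : ℝ}
    (hβ₀ : 0 < β) (hβ₁ : β < 1) {d : ι → ℝ} (hd : ∀ j, d j ≤ 0) (hsum : -1 ≤ ∑ j, d j)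
    {i : ι} (hi : d i < 0) :
    ∑ j, |β * (if i = j then 1 else 0) + (1 - β) * d j| < 1 := by
  have hle : ∀ j, |β * (if i = j then 1 else 0) + (1 - β) * d j| ≤
      β * (if i = j then 1 else 0) - (1 - β) * d j := fun j => by
    have := mul_nonpos_of_nonneg_of_nonpos (sub_nonneg.mpr hβ₁.le) (hd j)
    refine abs_le.mpr ⟨?_, ?_⟩ <;> split_ifs <;> linarith
  have hlt : |β + (1 - β) * d i| < β - (1 - β) * d i := by
    have := mul_neg_of_pos_of_neg (sub_pos.mpr hβ₁) hi
    exact abs_lt.mpr ⟨by linarith, by linarith⟩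
  calc ∑ j, |β * (if i = j then 1 else 0) + (1 - β) * d j|
      < ∑ j, (β * (if i = j then 1 else 0) - (1 - β) * d j) :=
        Finset.sum_lt_sum (fun j _ => hle j) ⟨i, mem_univ i, by simpa using hlt⟩
    _ = β - (1 - β) * ∑ j, d j := by simp [Finset.sum_sub_distrib, Finset.mul_sum]
    _ ≤ 1 := by nlinarith

theorem sum_sum_mul_div_sum_le {ι κ : Type*} [Fintype ι] [Fintype κ] {p : κ → ℝ}
    (hp : ∀ k, 0 ≤ p k) (v : ι → κ → ℝ) :
    ∑ i, ∑ k, p k * (v i k / ∑ j, v j k) ≤ ∑ k, p k := by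
  rw [Finset.sum_comm]
  refine Finset.sum_le_sum fun k _ => ?_
  rw [← Finset.mul_sum, ← Finset.sum_div]
  exact mul_le_of_le_one_right (hp k) (div_self_le_one _)

theorem sum_mul_div_sum_pos {ι κ : Type*} [Fintype ι] [Fintype κ] {p : κ → ℝ} {v : ι → κ → ℝ}
    (hp : ∀ k, 0 ≤ p k) (hv : ∀ i k, 0 ≤ v i k) {i : ι} {k : κ} (hpk : 0 < p k)
    (hvik : 0 < v i k) :
    0 < ∑ k, p k * (v i k / ∑ j, v j k) := by
  have hS : 0 < ∑ j, v j k :=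
    hvik.trans_le (Finset.single_le_sum (fun j _ => hv j k) (mem_univ i))
  refine Finset.sum_pos' (fun k _ => ?_) ⟨k, mem_univ k, by positivity⟩
  exact mul_nonneg (hp k) (div_nonneg (hv i k) (Finset.sum_nonneg fun j _ => hv j k))

theorem sum_mul_rpow_pos {ι κ : Type*} [Fintype ι] {w : ι → κ → ℝ} (hw : ∀ i k, 0 ≤ w i k)
    {b : ℝ} (hb : 0 < b) (r : ι → ℝ) {i : ι} {k : κ} (hwik : 0 < w i k) :
    0 < ∑ j, w j k * b ^ r j :=
  (mul_pos hwik (Real.rpow_pos_of_pos hb _)).trans_le <| Finset.single_le_sum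
    (fun j _ => mul_nonneg (hw j k) (Real.rpow_pos_of_pos hb _).le) (mem_univ i)

theorem logb_div_prod_rpow {κ : Type*} [Fintype κ] (b : ℝ) {c : ℝ} (hc : c ≠ 0) {s p : κ → ℝ}
    (hs : ∀ k, 0 ≤ s k) (hsp : ∀ k, p k ≠ 0 → s k ≠ 0) :
    Real.logb b (c / ∏ k, s k ^ p k) = Real.logb b c - ∑ k, p k * Real.logb b (s k) := by
  have hpow : ∀ k, s k ^ p k ≠ 0 ∧ Real.logb b (s k ^ p k) = p k * Real.logb b (s k) := by
    intro k
    rcases eq_or_ne (p k) 0 with hpk | hpk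
    · simp [hpk]
    · have hsk := (hs k).lt_of_ne' (hsp k hpk)
      exact ⟨(Real.rpow_pos_of_pos hsk _).ne', Real.logb_rpow_eq_mul_logb_of_pos hsk⟩
  rw [Real.logb_div hc (Finset.prod_ne_zero_iff.mpr fun k _ => (hpow k).1),
    Real.logb_prod _ _ fun k _ => (hpow k).1]
  simp only [fun k => (hpow k).2]

theorem hasDerivAt_sum_mul_logb_sum_rpow_update {ι κ : Type*} [Fintype ι] [Fintype κ]
    [DecidableEq ι] {b : ℝ} (hb₀ : 0 < b) (hb₁ : b ≠ 1) (w : ι → κ → ℝ) (p : κ → ℝ)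
    (r : ι → ℝ) (i : ι) (h : ∀ k, p k ≠ 0 → ∑ j, w j k * b ^ r j ≠ 0) :
    HasDerivAt
      (fun u => ∑ k, p k * Real.logb b (∑ j, w j k * b ^ Function.update r i u j))
      (∑ k, p k * (w i k * b ^ r i / ∑ j, w j k * b ^ r j)) (r i) := by
  refine HasDerivAt.fun_sum fun k _ => ?_
  rcases eq_or_ne (p k) 0 with hpk | hpk
  · simpa [hpk] using hasDerivAt_const (r i) (0 : ℝ)
  have hlogb : Real.log b ≠ 0 := Real.log_ne_zero_of_pos_of_ne_one hb₀ hb₁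
  have hsum : HasDerivAt (fun u => ∑ j, w j k * b ^ Function.update r i u j)
      (∑ j, w j k * (Real.log b * Pi.single (M := fun _ => ℝ) i 1 j * b ^ r j)) (r i) := by
    refine HasDerivAt.fun_sum fun j _ => ?_
    have := ((hasDerivAt_pi.mp (hasDerivAt_update r i (r i)) j).const_rpow hb₀).const_mul (w j k)
    simpa using this
  have := ((hsum.log (by simpa using h k hpk)).div_const (Real.log b)).const_mul (p k)
  simp only [Function.update_eq_self, Pi.single_apply, mul_ite, mul_one, mul_zero, ite_mul,
    zero_mul, Finset.sum_ite_eq', mem_univ, if_true, Real.log_div_log] at this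
  refine this.congr_deriv ?_
  field_simp

section Channel

variable {X Y A : Type} [Fintype X] [Fintype Y] {PX : X → ℝ} {PW : A → X → Y → ℝ}

theorem Hfun_eq_logb_sub_sum {α : A → X → ℝ} {a : A} {x : X} (hPX : ∀ x, 0 < PX x)
    (hPW : ∀ x y, 0 ≤ PW a x y) (hα : 0 < α a x) (μ : X → ℝ) (q : A × X → ℝ) :
    Hfun PX PW μ α q a x = Real.logb 2 ((2 : ℝ) ^ μ x * α a x) -
      ∑ y, PW a x y * Real.logb 2 (∑ xt, PX xt * PW a xt y * (2 : ℝ) ^ q (a, xt)) := by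
  have hw : ∀ xt y, 0 ≤ PX xt * PW a xt y := fun xt y => mul_nonneg (hPX xt).le (hPW xt y)
  refine logb_div_prod_rpow 2 (by positivity)
    (fun y => Finset.sum_nonneg fun xt _ => by have := hw xt y; positivity) fun y hy => ?_
  exact (sum_mul_rpow_pos hw two_pos _ (mul_pos (hPX x) ((hPW x y).lt_of_ne' hy))).ne'

variable [DecidableEq A]

theorem Hpd_nonpos {a : A} (hPX : ∀ x, 0 < PX x) (hPW : ∀ x y, 0 ≤ PW a x y) (q : A × X → ℝ)
    (x : X) (a' : A) (x' : X) :
    Hpd PX PW q a x a' x' ≤ 0 := by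
  rcases eq_or_ne a a' with rfl | ha
  · have hv : ∀ xt y, 0 ≤ PX xt * PW a xt y * (2 : ℝ) ^ q (a, xt) := fun xt y => by
      have := hPX xt; have := hPW xt y; positivity
    simp only [Hpd, if_true, neg_mul, one_mul, neg_nonpos]
    exact Finset.sum_nonneg fun y _ =>
      mul_nonneg (hPW x y) (div_nonneg (hv x' y) (Finset.sum_nonneg fun xt _ => hv xt y))
  · simp [Hpd, ha]

theorem Hpd_self_neg {a : A} (hPX : ∀ x, 0 < PX x) (hPW : ∀ x, IsPMF (PW a x))
    (q : A × X → ℝ) (x : X) :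
    Hpd PX PW q a x a x < 0 := by
  have hv : ∀ xt y, 0 ≤ PX xt * PW a xt y * (2 : ℝ) ^ q (a, xt) := fun xt y => by
    have := hPX xt; have := (hPW xt).1 y; positivity
  obtain ⟨y, hy⟩ := (hPW x).exists_pos
  simp only [Hpd, if_true, neg_mul, one_mul, neg_neg_iff_pos]
  exact sum_mul_div_sum_pos (hPW x).1 hv hy (by have := hPX x; positivity)

theorem neg_one_le_sum_Hpd [Fintype A] {a : A} {x : X} (hPW : IsPMF (PW a x))
    (q : A × X → ℝ) :
    -1 ≤ ∑ p : A × X, Hpd PX PW q a x p.1 p.2 := by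
  rw [Fintype.sum_prod_type, Finset.sum_eq_single a (fun a' _ ha' => by simp [Hpd, Ne.symm ha'])
    (by simp)]
  simp only [Hpd, if_true, neg_mul, one_mul, Finset.sum_neg_distrib, neg_le_neg_iff]
  exact (sum_sum_mul_div_sum_le hPW.1 _).trans_eq hPW.2

variable [DecidableEq X]

theorem hasDerivAt_Hfun_update {α : A → X → ℝ} {a : A} {x : X} (hPX : ∀ x, 0 < PX x)
    (hPW : ∀ x y, 0 ≤ PW a x y) (hα : 0 < α a x) (μ : X → ℝ) (q : A × X → ℝ)
    (a' : A) (x' : X) :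
    HasDerivAt (fun u => Hfun PX PW μ α (Function.update q (a', x') u) a x)
      (Hpd PX PW q a x a' x') (q (a', x')) := by
  rcases eq_or_ne a a' with rfl | ha
  · have hslice : ∀ u xt, Function.update q (a, x') u (a, xt) =
        Function.update (fun x => q (a, x)) x' u xt := fun u xt => by
      rcases eq_or_ne xt x' with rfl | hxt <;> simp [*]
    simp only [Hfun_eq_logb_sub_sum hPX hPW hα, hslice]
    have hw : ∀ xt y, 0 ≤ PX xt * PW a xt y := fun xt y => mul_nonneg (hPX xt).le (hPW xt y)
    have := (hasDerivAt_sum_mul_logb_sum_rpow_update two_pos (by norm_num)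
      (fun xt y => PX xt * PW a xt y) (PW a x) (fun x => q (a, x)) x' fun y hy =>
        (sum_mul_rpow_pos hw two_pos _ (mul_pos (hPX x) ((hPW x y).lt_of_ne' hy))).ne'
      ).const_sub (Real.logb 2 ((2 : ℝ) ^ μ x * α a x))
    simpa [Hpd] using this
  · have hconst : (fun u => Hfun PX PW μ α (Function.update q (a', x') u) a x) =
        fun _ => Hfun PX PW μ α q a x := funext fun u => by
      simp only [Hfun, Function.update_of_ne fun h : (a, _) = (a', x') => ha (congrArg Prod.fst h)]
    simpa [hconst, Hpd, ha] using hasDerivAt_const (q (a', x')) (Hfun PX PW μ α q a x)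

theorem hasDerivAt_Gmap_update {α : A → X → ℝ} {a : A} {x : X} (hPX : ∀ x, 0 < PX x)
    (hPW : ∀ x y, 0 ≤ PW a x y) (hα : 0 < α a x) (μ : X → ℝ) (β : ℝ) (q : A × X → ℝ)
    (a' : A) (x' : X) :
    HasDerivAt (fun u => Gmap PX PW μ α β (Function.update q (a', x') u) (a, x))
      (Gpd PX PW β q a x a' x') (q (a', x')) := by
  have hcoord := hasDerivAt_pi.mp (hasDerivAt_update q (a', x') (q (a', x'))) (a, x)
  refine ((hcoord.const_mul β).fun_add
    ((hasDerivAt_Hfun_update hPX hPW hα μ q a' x').const_mul (1 - β))).congr_deriv ?_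
  simp [Gpd, Pi.single_apply]

end Channel

theorem Gmap_jacobian_linf_norm_lt_one_general
    {X Y A : Type} [Fintype X] [Fintype Y] [Fintype A]
    [DecidableEq X] [DecidableEq A]
    (PX : X → ℝ) (PW : A → X → Y → ℝ) (μ : X → ℝ) (α : A → X → ℝ)
    (hPXpos : ∀ x, 0 < PX x)
    (hPW : ∀ a x, IsPMF (PW a x))
    (hα : ∀ a x, 0 < α a x)
    (β : ℝ) (hβ₀ : 0 < β) (hβ₁ : β < 1) :
    ∀ (q : A × X → ℝ) (at' : A) (xt' : X),
      (∀ (a' : A) (x' : X),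
        HasDerivAt
          (fun u : ℝ => Gmap PX PW μ α β (Function.update q (a', x') u) (at', xt'))
          (Gpd PX PW β q at' xt' a' x') (q (a', x'))) ∧
      ∑ a', ∑ x', |Gpd PX PW β q at' xt' a' x'| < 1 := by
  intro q at' xt'
  have hPWnn : ∀ a x y, 0 ≤ PW a x y := fun a x y => (hPW a x).1 y
  refine ⟨hasDerivAt_Gmap_update hPXpos (hPWnn at') (hα at' xt') μ β q, ?_⟩
  rw [← Fintype.sum_prod_type' (f := fun a' x' => |Gpd PX PW β q at' xt' a' x'|)]
  exact sum_abs_mul_ite_add_lt_one hβ₀ hβ₁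
    (fun p : A × X => Hpd_nonpos hPXpos (hPWnn at') q xt' p.1 p.2)
    (neg_one_le_sum_Hpd (hPW at' xt') q) (Hpd_self_neg hPXpos (hPW at') q xt')

/-- For every `β ∈ (0,1)`, at every point `q` and for every component
`(ã,x̃)`, the absolute partial derivatives of `G_{ã|x̃}` sum to strictly less than `1`;
i.e., the `ℓ∞`-operator norm of the Jacobian of `G` is strictly less than `1`
everywhere. -/
theorem Gmap_jacobian_linf_norm_lt_one
    {X Y A : Type} [Fintype X] [Fintype Y] [Fintype A]
    [DecidableEq X] [DecidableEq Y] [DecidableEq A]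
    [Nonempty X] [Nonempty Y] [Nonempty A]
    (PX : X → ℝ) (PW : A → X → Y → ℝ) (μ : X → ℝ) (α : A → X → ℝ)
    (hPX : IsPMF PX) (hPXpos : ∀ x, 0 < PX x)
    (hPW : ∀ a x, IsPMF (PW a x))
    (hα : ∀ a x, 0 < α a x)
    (β : ℝ) (hβ₀ : 0 < β) (hβ₁ : β < 1) :
    ∀ (q : A × X → ℝ) (at' : A) (xt' : X),
      (∀ (a' : A) (x' : X),
        HasDerivAt
          (fun u : ℝ => Gmap PX PW μ α β (Function.update q (a', x') u) (at', xt'))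
          (Gpd PX PW β q at' xt' a' x') (q (a', x'))) ∧
      ∑ a', ∑ x', |Gpd PX PW β q at' xt' a' x'| < 1 :=
  Gmap_jacobian_linf_norm_lt_one_general PX PW μ α hPXpos hPW hα β hβ₀ hβ₁
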